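/- There exist quasinearly subharmonic functions u, v on ℝ² whose sum u + v is not quasinearly subharmonic. Concretely, u(x,y) = 3 if x = 0 and u(x,y) = 1 if x ≠ 0 is 3-quasinearly subharmonic, v ≡ -2 is harmonic (hence 1-quasinearly subharmonic), but u + v is not K-quasinearly subharmonic for any K ≥ 1. -/

import Mathlib

open MeasureTheory Metric
open scoped ENNReal

noncomputable section

/-- `ℝ^N` as Euclidean space. -/
abbrev Euc (N : ℕ) := EuclideanSpace ℝ (Fin N)

/-- `ν_N`: the volume of the unit ball in `ℝ^N`. -/
noncomputable def unitBallVol (N : ℕ) : ℝ := (volume (ball (0 : Euc N) 1)).toReal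

/-- Positive part of an extended real, valued in `ℝ≥0∞`. -/
noncomputable def epos (x : EReal) : ℝ≥0∞ := if x = ⊤ then ⊤ else ENNReal.ofReal x.toReal

/-- The extended-real valued Lebesgue integral of `u` over `s`
(well defined whenever the positive part is integrable). -/
noncomputable def esetInt {N : ℕ} (u : Euc N → EReal) (s : Set (Euc N)) : EReal :=
  ((∫⁻ y in s, epos (u y)) : ℝ≥0∞) - ((∫⁻ y in s, epos (-(u y))) : ℝ≥0∞)

/-- The generalized sub-mean-value inequality
`u(x) ≤ K/(ν_N r^N) ∫_{B(x,r)} u dm_N` over all closed balls contained in `D`. -/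
def SubMeanIneq {N : ℕ} (K : ℝ) (D : Set (Euc N)) (u : Euc N → EReal) : Prop :=
  ∀ x r, 0 < r → closedBall x r ⊆ D →
    u x ≤ ((K / (unitBallVol N * r ^ N) : ℝ) : EReal) * esetInt u (ball x r)

/-- `u` is `K`-quasinearly subharmonic n.s. (in the narrow sense) on `D`:
`u` is measurable, `u⁺ ∈ L¹_loc(D)`, `u < +∞` and the sub-mean-value
inequality with constant `K` holds on all closed balls in `D`. -/
def QNSns {N : ℕ} (K : ℝ) (D : Set (Euc N)) (u : Euc N → EReal) : Prop :=
  1 ≤ K ∧ AEMeasurable u (volume.restrict D) ∧ (∀ x ∈ D, u x < ⊤) ∧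
  LocallyIntegrableOn (fun y => ((u y) ⊔ 0).toReal) D volume ∧
  SubMeanIneq K D u

/-- The family of inequalities (for every `M ≥ 0`, applied to `u_M = max (u, -M) + M`)
defining `K`-quasinearly subharmonic functions. -/
def QNSIneqFull {N : ℕ} (K : ℝ) (D : Set (Euc N)) (u : Euc N → EReal) : Prop :=
  ∀ M : ℝ, 0 ≤ M → ∀ x r, 0 < r → closedBall x r ⊆ D →
    (u x ⊔ ((-M : ℝ) : EReal)) + (M : EReal) ≤
      ((K / (unitBallVol N * r ^ N) : ℝ) : EReal) *
        ((∫⁻ y in ball x r, epos ((u y ⊔ ((-M : ℝ) : EReal)) + (M : EReal))) : ℝ≥0∞)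

/-- `u` is `K`-quasinearly subharmonic on `D`. -/
def QNSfull {N : ℕ} (K : ℝ) (D : Set (Euc N)) (u : Euc N → EReal) : Prop :=
  1 ≤ K ∧ AEMeasurable u (volume.restrict D) ∧ (∀ x ∈ D, u x < ⊤) ∧
  LocallyIntegrableOn (fun y => ((u y) ⊔ 0).toReal) D volume ∧
  QNSIneqFull K D u

/-- `u ∈ L¹_loc(D)` for an extended-real valued `u`. -/
def LocIntE {N : ℕ} (u : Euc N → EReal) (D : Set (Euc N)) : Prop :=
  ∀ k, k ⊆ D → IsCompact k → (∫⁻ y in k, epos (u y) + epos (-(u y))) < ⊤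

/-- The sub-mean-value inequality for real-valued functions. -/
def SubMeanIneqR {N : ℕ} (K : ℝ) (D : Set (Euc N)) (u : Euc N → ℝ) : Prop :=
  ∀ x r, 0 < r → closedBall x r ⊆ D →
    u x ≤ (K / (unitBallVol N * r ^ N)) * ∫ y in ball x r, u y

/-- The quasinearly subharmonicity inequalities (for every `M ≥ 0`,
applied to `u_M = max (u, -M) + M`) for real-valued functions. -/
def QNSIneqFullR {N : ℕ} (K : ℝ) (D : Set (Euc N)) (u : Euc N → ℝ) : Prop :=
  ∀ M : ℝ, 0 ≤ M → ∀ x r, 0 < r → closedBall x r ⊆ D →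
    max (u x) (-M) + M ≤
      (K / (unitBallVol N * r ^ N)) * ∫ y in ball x r, (max (u y) (-M) + M)

/-- `u : D → [-∞, +∞)` is harmonic on `D`: it is finite (real-valued) on `D`,
continuous on `D`, and satisfies the mean value equality on all closed balls in `D`. -/
def IsHarmonicOn {N : ℕ} (D : Set (Euc N)) (u : Euc N → EReal) : Prop :=
  (∀ x ∈ D, u x ≠ ⊥ ∧ u x ≠ ⊤) ∧ ContinuousOn (fun x => (u x).toReal) D ∧
  ∀ x r, 0 < r → closedBall x r ⊆ D →
    (u x).toReal = (1 / (unitBallVol N * r ^ N)) * ∫ y in ball x r, (u y).toReal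

end

/-! The line `{x = 0}` is Lebesgue-null, so every ball average only sees the values off the line,
where `u = 1` and `u + v = -1`. Hence `u_M` has ball averages `1 + M ≥ (3 + M) / 3`, while
`(u + v)_1` has ball averages `0` but equals `2` on the line. -/

theorem EuclideanSpace.ae_apply_ne {ι : Type*} [Fintype ι] (i : ι) (c : ℝ) :
    ∀ᵐ p : EuclideanSpace ℝ ι, p i ≠ c :=
  (PiLp.volume_preserving_ofLp ι).quasiMeasurePreserving.ae
    (volume_pi (α := fun _ : ι => ℝ) ▸ Measure.ae_eval_ne _ i c)

theorem unitBallVol_pos (N : ℕ) : 0 < unitBallVol N :=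
  ENNReal.toReal_pos (measure_ball_pos _ _ one_pos).ne' measure_ball_lt_top.ne

theorem volume_ball_toReal {N : ℕ} (x : Euc N) {r : ℝ} (hr : 0 < r) :
    (volume (ball x r)).toReal = unitBallVol N * r ^ N := by
  rw [Measure.addHaar_ball_of_pos volume x hr, ENNReal.toReal_mul,
    ENNReal.toReal_ofReal (by positivity), finrank_euclideanSpace_fin, mul_comm, unitBallVol]

theorem mul_setIntegral_ball_of_ae_eq_const {N : ℕ} {f : Euc N → ℝ} {c : ℝ}
    (hf : f =ᵐ[volume] fun _ => c) (K : ℝ) (x : Euc N) {r : ℝ} (hr : 0 < r) :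
    K / (unitBallVol N * r ^ N) * ∫ y in ball x r, f y = K * c := by
  have hν := unitBallVol_pos N
  have hrN := pow_pos hr N
  rw [integral_congr_ae (ae_restrict_of_ae hf), setIntegral_const, smul_eq_mul,
    measureReal_def, volume_ball_toReal x hr]
  field_simp

theorem qnsIneqFullR_univ_iff_of_ae_eq_const {N : ℕ} {K c : ℝ} {u : Euc N → ℝ}
    (hu : u =ᵐ[volume] fun _ => c) :
    QNSIneqFullR K Set.univ u ↔
      ∀ M : ℝ, 0 ≤ M → ∀ x, max (u x) (-M) + M ≤ K * (max c (-M) + M) := by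
  have hmean (M : ℝ) (x : Euc N) {r : ℝ} (hr : 0 < r) :
      K / (unitBallVol N * r ^ N) * ∫ y in ball x r, (max (u y) (-M) + M) =
        K * (max c (-M) + M) :=
    mul_setIntegral_ball_of_ae_eq_const (hu.mono fun y hy => by rw [hy]) K x hr
  constructor
  · intro h M hM x
    simpa only [hmean M x one_pos] using h M hM x 1 one_pos (Set.subset_univ _)
  · intro h M hM x r hr _
    simpa only [hmean M x hr] using h M hM x

/-- the sum of two quasinearly subharmonic functions need not be
quasinearly subharmonic: `u = 3` on the line `x = 0` and `1` elsewhere is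
3-quasinearly subharmonic, `v ≡ -2` is 1-quasinearly subharmonic (harmonic),
but `u + v` is not K-quasinearly subharmonic for any `K ≥ 1`. -/
theorem sum_of_qns_not_qns :
    QNSIneqFullR 3 (Set.univ : Set (Euc 2))
      (fun p => if p 0 = 0 then (3 : ℝ) else 1) ∧
    QNSIneqFullR 1 (Set.univ : Set (Euc 2)) (fun _ => (-2 : ℝ)) ∧
    ¬ ∃ K : ℝ, 1 ≤ K ∧ QNSIneqFullR K (Set.univ : Set (Euc 2))
      (fun p => (if p 0 = 0 then (3 : ℝ) else 1) + (-2)) := by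
  have off_line {a b : ℝ} :
      (fun p : Euc 2 => if p 0 = 0 then a else b) =ᵐ[volume] fun _ => b :=
    (EuclideanSpace.ae_apply_ne 0 0).mono fun p hp => if_neg hp
  refine ⟨?_, ?_, ?_⟩
  · refine (qnsIneqFullR_univ_iff_of_ae_eq_const off_line).2 fun M hM x => ?_
    split_ifs <;> simp only [max_eq_left (show -M ≤ 1 by linarith),
      max_eq_left (show -M ≤ 3 by linarith)] <;> linarith
  · exact (qnsIneqFullR_univ_iff_of_ae_eq_const (Filter.EventuallyEq.refl _ _)).2
      fun M _ x => by rw [one_mul]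
  · rintro ⟨K, -, hK⟩
    have h := (qnsIneqFullR_univ_iff_of_ae_eq_const
      ((off_line (a := 3) (b := 1)).fun_add (Filter.EventuallyEq.refl _ fun _ => (-2 : ℝ))))
      |>.1 hK 1 zero_le_one 0
    norm_num at h
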